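/- arXiv:2602.11616 — 3 statements merged into one kernel-verified Lean document; each statement's English description precedes it below -/
import Mathlib

section
/- Let A be a positive semidefinite operator on ℂ^d with A ≼ I, and suppose a unit vector ψ satisfies ⟨ψ|A|ψ⟩ = 1 and, for all unit vectors φ orthogonal to ψ, ⟨φ|A|φ⟩ ≤ 1/2 + c for some c ∈ [0, 1/2). Then A ≼ (1/2 + c)·I + (1/2 − c)·|ψ⟩⟨ψ|. -/
/-!
Since `0 ≼ 1 - A` and `⟨ψ|(1 - A)|ψ⟩ = 0`, the vector `ψ` is fixed by `A`. Hence the projection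
`P = |ψ⟩⟨ψ|` satisfies `A P = P A = P`, and with `Q = 1 - P` and `λ = 1/2 + c` one has the
algebraic identity `Q (λ - A) Q = λ + (1 - λ) P - A`. The left side is positive semidefinite
because `Q` maps into `ψ⊥`, where the hypothesis (rescaled from unit vectors) says `A ≼ λ`.
-/

open Matrix
open scoped ComplexOrder

theorem IsIdempotentElem.one_sub_mul_smul_one_sub_mul_one_sub {K A : Type*} [CommRing K]
    [Ring A] [Algebra K A] {p a : A} (hp : IsIdempotentElem p) (hap : a * p = p)
    (hpa : p * a = p) (t : K) :
    (1 - p) * (t • 1 - a) * (1 - p) = t • 1 + (1 - t) • p - a := by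
  simp only [mul_sub, sub_mul, one_mul, mul_one, smul_mul_assoc, mul_smul_comm, hp.eq, hap, hpa]
  module

namespace Matrix

section CommRing

variable {n R : Type*} [Fintype n] [CommRing R]

theorem PosSemidef.conjTranspose_mul_mul_of_nonneg_on_range [PartialOrder R] [StarRing R]
    {M B : Matrix n n R} (hM : M.IsHermitian) (h : ∀ x, 0 ≤ star (B *ᵥ x) ⬝ᵥ M *ᵥ (B *ᵥ x)) :
    (Bᴴ * M * B).PosSemidef :=
  .of_dotProduct_mulVec_nonneg (isHermitian_conjTranspose_mul_mul B hM) fun x ↦ by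
    simpa only [star_mulVec, dotProduct_mulVec, vecMul_vecMul, ← mulVec_mulVec] using h x

theorem isIdempotentElem_vecMulVec_of_dotProduct_eq_one {u v : n → R} (h : v ⬝ᵥ u = 1) :
    IsIdempotentElem (vecMulVec u v) := by
  rw [IsIdempotentElem, vecMulVec_mul_vecMulVec, h, one_smul]

theorem dotProduct_one_sub_vecMulVec_mulVec [DecidableEq n] {u v : n → R} (h : v ⬝ᵥ u = 1)
    (x : n → R) : v ⬝ᵥ (1 - vecMulVec u v) *ᵥ x = 0 := by
  simp [sub_mulVec, vecMulVec_mulVec, dotProduct_sub, h]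

end CommRing

section RCLike

variable {n 𝕜 : Type*} [Fintype n] [RCLike 𝕜]

theorem mulVec_eq_self_of_posSemidef_one_sub [DecidableEq n] {A : Matrix n n 𝕜}
    (hA : (1 - A).PosSemidef) {ψ : n → 𝕜} (hψ : star ψ ⬝ᵥ A *ᵥ ψ = star ψ ⬝ᵥ ψ) :
    A *ᵥ ψ = ψ := by
  have h := (hA.dotProduct_mulVec_zero_iff ψ).mp (by
    rw [sub_mulVec, one_mulVec, dotProduct_sub, hψ, sub_self])
  rwa [sub_mulVec, one_mulVec, sub_eq_zero, eq_comm] at h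

theorem star_smul_dotProduct_mulVec_smul (M : Matrix n n 𝕜) (c : 𝕜) (v : n → 𝕜) :
    star (c • v) ⬝ᵥ M *ᵥ (c • v) = star c * c * (star v ⬝ᵥ M *ᵥ v) := by
  rw [mulVec_smul, star_smul, smul_dotProduct, dotProduct_smul, smul_eq_mul, smul_eq_mul,
    mul_assoc, mul_left_comm]

theorem dotProduct_star_self_eq_ofReal_re (v : n → 𝕜) :
    star v ⬝ᵥ v = ((RCLike.re (star v ⬝ᵥ v) : ℝ) : 𝕜) :=
  RCLike.ext_iff.mpr ⟨by simp, by simp [(RCLike.nonneg_iff.mp (dotProduct_star_self_nonneg v)).2]⟩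

theorem re_dotProduct_mulVec_le_of_forall_unit [DecidableEq n] {A : Matrix n n 𝕜}
    {p : (n → 𝕜) → Prop} (hp : ∀ (c : 𝕜) v, p v → p (c • v)) {b : ℝ}
    (h : ∀ v, star v ⬝ᵥ v = 1 → p v → RCLike.re (star v ⬝ᵥ A *ᵥ v) ≤ b) {v : n → 𝕜}
    (hv : p v) : RCLike.re (star v ⬝ᵥ A *ᵥ v) ≤ b * RCLike.re (star v ⬝ᵥ v) := by
  rcases eq_or_ne v 0 with rfl | hv0
  · simp
  set t := RCLike.re (star v ⬝ᵥ v)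
  have ht : 0 < t := (RCLike.pos_iff.mp (dotProduct_star_self_pos_iff.mpr hv0)).1
  set c : 𝕜 := (((√t)⁻¹ : ℝ) : 𝕜)
  have hc : star c * c = ((t⁻¹ : ℝ) : 𝕜) := by
    rw [RCLike.star_def, RCLike.conj_ofReal, ← RCLike.ofReal_mul, ← mul_inv,
      Real.mul_self_sqrt ht.le]
  have hscale (M : Matrix n n 𝕜) :
      RCLike.re (star (c • v) ⬝ᵥ M *ᵥ (c • v)) = t⁻¹ * RCLike.re (star v ⬝ᵥ M *ᵥ v) := by
    rw [star_smul_dotProduct_mulVec_smul, hc, RCLike.re_ofReal_mul]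
  have hunit : star (c • v) ⬝ᵥ c • v = 1 := by
    have hre := hscale 1
    rw [one_mulVec, one_mulVec, inv_mul_cancel₀ ht.ne'] at hre
    rw [dotProduct_star_self_eq_ofReal_re, hre, RCLike.ofReal_one]
  have hbound := h _ hunit (hp c v hv)
  rw [hscale, inv_mul_le_iff₀ ht] at hbound
  linarith

theorem IsHermitian.dotProduct_ofReal_smul_one_sub_mulVec_nonneg [DecidableEq n]
    {A : Matrix n n 𝕜} (hA : A.IsHermitian) {b : ℝ} {v : n → 𝕜}
    (h : RCLike.re (star v ⬝ᵥ A *ᵥ v) ≤ b * RCLike.re (star v ⬝ᵥ v)) :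
    0 ≤ star v ⬝ᵥ ((b : 𝕜) • 1 - A) *ᵥ v := by
  rw [sub_mulVec, smul_mulVec, one_mulVec, dotProduct_sub, dotProduct_smul, smul_eq_mul,
    RCLike.nonneg_iff, map_sub, map_sub, RCLike.re_ofReal_mul, RCLike.im_ofReal_mul,
    hA.im_star_dotProduct_mulVec_self, (RCLike.nonneg_iff.mp (dotProduct_star_self_nonneg v)).2]
  exact ⟨by linarith, by simp⟩

end RCLike

end Matrix

theorem stmt3_general {d : ℕ} (A : Matrix (Fin d) (Fin d) ℂ) (ψ : Fin d → ℂ) (c : ℝ)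
    (hAI : ((1 : Matrix (Fin d) (Fin d) ℂ) - A).PosSemidef)
    (hψ : star ψ ⬝ᵥ ψ = 1) (hAψ : star ψ ⬝ᵥ A.mulVec ψ = 1)
    (horth : ∀ φ : Fin d → ℂ, star φ ⬝ᵥ φ = 1 → star ψ ⬝ᵥ φ = 0 →
      (star φ ⬝ᵥ A.mulVec φ).re ≤ 1 / 2 + c) :
    (((1 / 2 + c : ℝ) : ℂ) • (1 : Matrix (Fin d) (Fin d) ℂ) +
      ((1 / 2 - c : ℝ) : ℂ) • Matrix.vecMulVec ψ (star ψ) - A).PosSemidef := by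
  have hA : A.IsHermitian := by simpa using isHermitian_one.sub hAI.1
  have hfix : A *ᵥ ψ = ψ := mulVec_eq_self_of_posSemidef_one_sub hAI (hAψ.trans hψ.symm)
  have hAP : A * vecMulVec ψ (star ψ) = vecMulVec ψ (star ψ) := by rw [mul_vecMulVec, hfix]
  have hPA : vecMulVec ψ (star ψ) * A = vecMulVec ψ (star ψ) := by
    rw [vecMulVec_mul, ← hA.eq, ← star_mulVec, hfix]
  have hQ : (1 - vecMulVec ψ (star ψ))ᴴ = 1 - vecMulVec ψ (star ψ) := by simp
  rw [show ((1 / 2 - c : ℝ) : ℂ) = 1 - ((1 / 2 + c : ℝ) : ℂ) by push_cast; ring,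
    ← (isIdempotentElem_vecMulVec_of_dotProduct_eq_one hψ).one_sub_mul_smul_one_sub_mul_one_sub
      hAP hPA]
  have hsandwich := PosSemidef.conjTranspose_mul_mul_of_nonneg_on_range
    (B := 1 - vecMulVec ψ (star ψ)) ((isHermitian_one.smul (Complex.conj_ofReal _)).sub hA)
    fun x ↦ hA.dotProduct_ofReal_smul_one_sub_mulVec_nonneg
      (re_dotProduct_mulVec_le_of_forall_unit (p := fun φ ↦ star ψ ⬝ᵥ φ = 0)
        (fun _ _ hφ ↦ by simp [dotProduct_smul, hφ]) horth
        (dotProduct_one_sub_vecMulVec_mulVec hψ x))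
  -- `hsandwich` casts `1 / 2 + c` via `RCLike.ofReal`, definitionally `Complex.ofReal`
  rwa [hQ] at hsandwich

/-- if `0 ≼ A ≼ I`, `⟨ψ|A|ψ⟩ = 1` for a unit vector `ψ`, and
`⟨φ|A|φ⟩ ≤ 1/2 + c` for all unit vectors `φ ⊥ ψ` (with `c ∈ [0,1/2)`), then
`A ≼ (1/2 + c)·I + (1/2 − c)·|ψ⟩⟨ψ|`. -/
theorem stmt3 {d : ℕ} (A : Matrix (Fin d) (Fin d) ℂ) (ψ : Fin d → ℂ) (c : ℝ)
    (hA : A.PosSemidef) (hAI : ((1 : Matrix (Fin d) (Fin d) ℂ) - A).PosSemidef)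
    (hψ : star ψ ⬝ᵥ ψ = 1) (hAψ : star ψ ⬝ᵥ A.mulVec ψ = 1)
    (hc : 0 ≤ c) (hc2 : c < 1 / 2)
    (horth : ∀ φ : Fin d → ℂ, star φ ⬝ᵥ φ = 1 → star ψ ⬝ᵥ φ = 0 →
      (star φ ⬝ᵥ A.mulVec φ).re ≤ 1 / 2 + c) :
    (((1 / 2 + c : ℝ) : ℂ) • (1 : Matrix (Fin d) (Fin d) ℂ) +
      ((1 / 2 - c : ℝ) : ℂ) • Matrix.vecMulVec ψ (star ψ) - A).PosSemidef :=
  stmt3_general A ψ c hAI hψ hAψ horth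
end

section
/- Let A be a Hermitian operator on ℂ^d with A ≼ (1/2 + c)·I + (1/2 − c)·|ψ⟩⟨ψ| for a unit vector ψ and c ∈ [0,1/2). If ρ is a density operator with tr(ρA) ≥ 1 − ε, then ⟨ψ|ρ|ψ⟩ ≥ 1 − 2ε/(1 − 2c). -/
open Matrix
open scoped ComplexOrder

/-! Pairing the operator inequality with `ρ ≽ 0` (the trace of a product of positive semidefinite
matrices is nonnegative) gives `tr(ρA) ≤ (1/2 + c) + (1/2 − c)⟨ψ|ρ|ψ⟩`, and `1/2 − c > 0`
lets us solve for `⟨ψ|ρ|ψ⟩`. -/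

namespace Matrix

variable {n 𝕜 : Type*} [Fintype n] [RCLike 𝕜]

theorem trace_mul_vecMulVec {R : Type*} [CommSemiring R] (M : Matrix n n R) (u v : n → R) :
    (M * vecMulVec u v).trace = v ⬝ᵥ M *ᵥ u := by
  rw [mul_vecMulVec, trace_vecMulVec, dotProduct_comm]

theorem PosSemidef.trace_mul_nonneg [DecidableEq n] {A B : Matrix n n 𝕜} (hA : A.PosSemidef)
    (hB : B.PosSemidef) : 0 ≤ (A * B).trace := by
  open scoped MatrixOrder in
  -- `tr (A * B) = tr (S * A * S)` for `S = √B`, and `S * A * S = Sᴴ * A * S` is PSD.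
  obtain ⟨S, hSS, hS⟩ : ∃ S : Matrix n n 𝕜, S * S = B ∧ Sᴴ = S :=
    ⟨CFC.sqrt B, CFC.sqrt_mul_sqrt_self B hB.nonneg, (CFC.sqrt_nonneg B).posSemidef.1⟩
  rw [← hSS, ← Matrix.mul_assoc, trace_mul_cycle]
  simpa only [hS] using (hA.conjTranspose_mul_mul_same S).trace_nonneg

theorem re_trace_mul_le_of_posSemidef_sub [DecidableEq n] {ρ A : Matrix n n 𝕜} {ψ : n → 𝕜}
    {a b : ℝ}
    (hρ : ρ.PosSemidef) (htr : ρ.trace = 1)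
    (hA : ((a : 𝕜) • (1 : Matrix n n 𝕜) + (b : 𝕜) • vecMulVec ψ (star ψ) - A).PosSemidef) :
    RCLike.re (ρ * A).trace ≤ a + b * RCLike.re (star ψ ⬝ᵥ ρ *ᵥ ψ) := by
  have hnonneg := hρ.trace_mul_nonneg hA
  rw [Matrix.mul_sub, Matrix.mul_add, Matrix.mul_smul, Matrix.mul_smul, Matrix.mul_one,
    trace_sub, trace_add, trace_smul, trace_smul, htr, trace_mul_vecMulVec] at hnonneg
  have hre := (RCLike.nonneg_iff.mp hnonneg).1
  simp only [smul_eq_mul, mul_one, map_sub, map_add, RCLike.ofReal_re, RCLike.mul_re,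
    RCLike.ofReal_im, zero_mul, sub_zero, sub_nonneg] at hre
  linarith

end Matrix

theorem stmt4_general {d : ℕ} (A ρ : Matrix (Fin d) (Fin d) ℂ) (ψ : Fin d → ℂ) (c ε : ℝ)
    (hc2 : c < 1 / 2)
    (hLoew : (((1 / 2 + c : ℝ) : ℂ) • (1 : Matrix (Fin d) (Fin d) ℂ) +
      ((1 / 2 - c : ℝ) : ℂ) • Matrix.vecMulVec ψ (star ψ) - A).PosSemidef)
    (hρ : ρ.PosSemidef) (htr : ρ.trace = 1)
    (htrA : 1 - ε ≤ (ρ * A).trace.re) :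
    1 - 2 * ε / (1 - 2 * c) ≤ (star ψ ⬝ᵥ ρ.mulVec ψ).re := by
  have hgap : 0 < 1 / 2 - c := by linarith
  have hle : (ρ * A).trace.re ≤ (1 / 2 + c) + (1 / 2 - c) * (star ψ ⬝ᵥ ρ *ᵥ ψ).re :=
    re_trace_mul_le_of_posSemidef_sub hρ htr hLoew
  rw [show 2 * ε / (1 - 2 * c) = ε / (1 / 2 - c) by field_simp, sub_le_comm,
    le_div_iff₀ hgap]
  nlinarith

/-- if `A` is Hermitian with `A ≼ (1/2 + c)·I + (1/2 − c)·|ψ⟩⟨ψ|` for a unit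
vector `ψ` and `c ∈ [0,1/2)`, and `ρ` is a density operator with `tr(ρA) ≥ 1 − ε`, then
`⟨ψ|ρ|ψ⟩ ≥ 1 − 2ε/(1 − 2c)`. -/
theorem stmt4 {d : ℕ} (A ρ : Matrix (Fin d) (Fin d) ℂ) (ψ : Fin d → ℂ) (c ε : ℝ)
    (hA : A.IsHermitian) (hψ : star ψ ⬝ᵥ ψ = 1) (hc : 0 ≤ c) (hc2 : c < 1 / 2)
    (hLoew : (((1 / 2 + c : ℝ) : ℂ) • (1 : Matrix (Fin d) (Fin d) ℂ) +
      ((1 / 2 - c : ℝ) : ℂ) • Matrix.vecMulVec ψ (star ψ) - A).PosSemidef)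
    (hρ : ρ.PosSemidef) (htr : ρ.trace = 1)
    (htrA : 1 - ε ≤ (ρ * A).trace.re) :
    1 - 2 * ε / (1 - 2 * c) ≤ (star ψ ⬝ᵥ ρ.mulVec ψ).re :=
  stmt4_general A ρ ψ c ε hc2 hLoew hρ htr htrA
end

section
/- Let ψ be a unit vector in (ℂ^2)^{⊗n}, decomposed over the first r qubits as ψ = ∑_z ⟨z| component with conditional unnormalized states ψ_z, all nonzero. Let α ∈ ℂ^{2^r} be the vector with α_z = ‖ψ_z‖, let β ∈ ℂ^{2^r} satisfy ‖β‖ = 1 and ⟨β, α⟩ = 0, and define φ = ∑_z β_z |z⟩ ⊗ (ψ_z/‖ψ_z‖). Then φ is a unit vector orthogonal to ψ, and ∑_z ‖φ_z‖² · |⟨ψ_z/‖ψ_z‖, φ_z/‖φ_z‖⟩|² = 1 (summing over z with φ_z ≠ 0); i.e., the conditional fidelity in the standard basis weighted by the outcome distribution of φ equals 1. -/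
/-!
Each conditional component of `φ` is a multiple of that of `ψ`: `φ_z = (β_z / ‖ψ_z‖) ψ_z`.
Hence `‖φ_z‖ = |β_z|`, so `‖φ‖² = ‖β‖² = 1`; the normalized components agree up to a phase,
so every conditional fidelity is `1` and the weighted sum is `‖φ‖² = 1`; and
`⟨ψ, φ⟩ = ∑_z β_z ‖ψ_z‖`, the conjugate of `⟨β, α⟩ = 0`.
-/

open Finset Classical

noncomputable section

/-- The conditional (unnormalized) component `ψ_z = (⟨z| ⊗ I) ψ`. -/
noncomputable def condVec {r m : ℕ}
    (ψ : EuclideanSpace ℂ ((Fin r → Bool) × (Fin m → Bool))) (z : Fin r → Bool) :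
    EuclideanSpace ℂ (Fin m → Bool) :=
  WithLp.toLp 2 (fun y => ψ (z, y))

section InnerProductSpace

variable {𝕜 E : Type*} [RCLike 𝕜] [NormedAddCommGroup E] [InnerProductSpace 𝕜 E]

theorem inner_smul_div_norm_self (x : E) (b : 𝕜) :
    inner 𝕜 x ((b / (‖x‖ : 𝕜)) • x) = b * ‖x‖ := by
  rw [inner_smul_right, inner_self_eq_norm_sq_to_K]
  rcases eq_or_ne ‖x‖ 0 with hx | hx
  · simp [hx]
  · field_simp

theorem norm_smul_div_norm_self {x : E} (hx : x ≠ 0) (b : 𝕜) :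
    ‖(b / (‖x‖ : 𝕜)) • x‖ = ‖b‖ := by
  have : ‖x‖ ≠ 0 := norm_ne_zero_iff.mpr hx
  rw [norm_smul, norm_div, RCLike.norm_ofReal, abs_norm, div_mul_cancel₀ _ this]

theorem norm_inner_normalize_smul_self [Module ℝ E] [IsScalarTower ℝ 𝕜 E] {x : E} {c : 𝕜}
    (hx : x ≠ 0) (hc : c ≠ 0) :
    ‖inner 𝕜 ((‖x‖⁻¹ : ℝ) • x) ((‖c • x‖⁻¹ : ℝ) • (c • x))‖ = 1 := by
  rw [RCLike.real_smul_eq_coe_smul (K := 𝕜), RCLike.real_smul_eq_coe_smul (K := 𝕜),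
    inner_smul_real_left, inner_smul_real_right, norm_smul, norm_smul, Real.norm_eq_abs,
    Real.norm_eq_abs, abs_inv, abs_inv, abs_norm, abs_norm, ← mul_assoc, ← mul_inv,
    inv_mul_eq_div, norm_inner_div_norm_mul_norm_eq_one_of_ne_zero_of_ne_zero_mul hx hc]

end InnerProductSpace

section Conditional

variable {r m : ℕ}

theorem inner_eq_sum_inner_condVec (ξ η : EuclideanSpace ℂ ((Fin r → Bool) × (Fin m → Bool))) :
    inner ℂ ξ η = ∑ z, inner ℂ (condVec ξ z) (condVec η z) := by
  rw [PiLp.inner_apply, Fintype.sum_prod_type]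
  rfl

theorem norm_sq_eq_sum_norm_condVec_sq
    (ξ : EuclideanSpace ℂ ((Fin r → Bool) × (Fin m → Bool))) :
    ‖ξ‖ ^ 2 = ∑ z, ‖condVec ξ z‖ ^ 2 := by
  rw [EuclideanSpace.norm_eq, Real.sq_sqrt (by positivity), Fintype.sum_prod_type]
  refine Finset.sum_congr rfl fun z _ => ?_
  rw [EuclideanSpace.norm_eq, Real.sq_sqrt (by positivity)]
  rfl

/-- `E_{z ∼ μ_φ} |⟨ψ̂_z, φ̂_z⟩|²` with `μ_φ(z) = ‖φ_z‖²`; outcomes with `φ_z = 0` carry no weight. -/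
def weightedCondFidelity (ψ φ : EuclideanSpace ℂ ((Fin r → Bool) × (Fin m → Bool))) : ℝ :=
  ∑ z ∈ Finset.univ.filter (fun z => condVec φ z ≠ 0),
    ‖condVec φ z‖ ^ 2 *
      ‖(inner ℂ ((‖condVec ψ z‖⁻¹ : ℝ) • condVec ψ z)
        ((‖condVec φ z‖⁻¹ : ℝ) • condVec φ z) : ℂ)‖ ^ 2

theorem weightedCondFidelity_eq_norm_sq
    {ψ φ : EuclideanSpace ℂ ((Fin r → Bool) × (Fin m → Bool))}
    (hpar : ∀ z, ∃ c : ℂ, condVec φ z = c • condVec ψ z) :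
    weightedCondFidelity ψ φ = ‖φ‖ ^ 2 := by
  rw [weightedCondFidelity, norm_sq_eq_sum_norm_condVec_sq]
  calc _ = ∑ z ∈ Finset.univ.filter (fun z => condVec φ z ≠ 0), ‖condVec φ z‖ ^ 2 := by
        refine Finset.sum_congr rfl fun z hz => ?_
        obtain ⟨c, hc⟩ := hpar z
        obtain ⟨hc0, hψ0⟩ := smul_ne_zero_iff.mp (hc ▸ (Finset.mem_filter.mp hz).2)
        rw [hc, norm_inner_normalize_smul_self hψ0 hc0, one_pow, mul_one]
    _ = ∑ z, ‖condVec φ z‖ ^ 2 :=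
        Finset.sum_filter_of_ne fun z _ h => by simpa using h

end Conditional

theorem stmt14_general {r m : ℕ}
    (ψ : EuclideanSpace ℂ ((Fin r → Bool) × (Fin m → Bool)))
    (hnz : ∀ z, condVec ψ z ≠ 0)
    (β : (Fin r → Bool) → ℂ) (hβ : ∑ z : Fin r → Bool, ‖β z‖ ^ 2 = 1)
    (hβα : ∑ z : Fin r → Bool, (starRingEnd ℂ) (β z) * (‖condVec ψ z‖ : ℂ) = 0)
    (φ : EuclideanSpace ℂ ((Fin r → Bool) × (Fin m → Bool)))
    (hφ : ∀ z y, φ (z, y) = β z * ψ (z, y) / (‖condVec ψ z‖ : ℂ)) :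
    ‖φ‖ = 1 ∧ (inner ℂ ψ φ : ℂ) = 0 ∧
    ∑ z ∈ Finset.univ.filter (fun z => condVec φ z ≠ 0),
      ‖condVec φ z‖ ^ 2 *
        ‖(inner ℂ ((‖condVec ψ z‖⁻¹ : ℝ) • condVec ψ z)
          ((‖condVec φ z‖⁻¹ : ℝ) • condVec φ z) : ℂ)‖ ^ 2 = 1 := by
  have hφψ : ∀ z, condVec φ z = (β z / (‖condVec ψ z‖ : ℂ)) • condVec ψ z := fun z => by
    ext y
    simp only [condVec, hφ, PiLp.smul_apply, smul_eq_mul, PiLp.toLp_apply]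
    ring
  have hφ_comp_norm : ∀ z, ‖condVec φ z‖ = ‖β z‖ := fun z => by
    rw [hφψ]
    exact norm_smul_div_norm_self (hnz z) (β z)
  have hφ_comp_inner : ∀ z, inner ℂ (condVec ψ z) (condVec φ z) = β z * ‖condVec ψ z‖ :=
    fun z => by
      rw [hφψ]
      exact inner_smul_div_norm_self _ _
  have hφ_norm : ‖φ‖ = 1 := by
    have : ‖φ‖ ^ 2 = 1 := by
      simp_rw [norm_sq_eq_sum_norm_condVec_sq, hφ_comp_norm, hβ]
    exact (pow_eq_one_iff_of_nonneg (norm_nonneg φ) two_ne_zero).mp this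
  refine ⟨hφ_norm, ?_, ?_⟩
  · have hconj := congrArg (starRingEnd ℂ) hβα
    simp only [map_sum, map_mul, Complex.conj_conj, Complex.conj_ofReal, map_zero] at hconj
    simp_rw [inner_eq_sum_inner_condVec, hφ_comp_inner, hconj]
  · change weightedCondFidelity ψ φ = 1
    rw [weightedCondFidelity_eq_norm_sq fun z => ⟨_, hφψ z⟩, hφ_norm, one_pow]

/-- given a unit vector `ψ` with all conditional components `ψ_z ≠ 0`,
`α_z = ‖ψ_z‖`, and `β` a unit vector with `⟨β, α⟩ = 0`, the state
`φ = ∑_z β_z |z⟩ ⊗ (ψ_z/‖ψ_z‖)` is a unit vector orthogonal to `ψ` whose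
standard-basis weighted conditional fidelity with `ψ` equals `1`. -/
theorem stmt14 {r m : ℕ}
    (ψ : EuclideanSpace ℂ ((Fin r → Bool) × (Fin m → Bool)))
    (hψ : ‖ψ‖ = 1) (hnz : ∀ z, condVec ψ z ≠ 0)
    (β : (Fin r → Bool) → ℂ) (hβ : ∑ z : Fin r → Bool, ‖β z‖ ^ 2 = 1)
    (hβα : ∑ z : Fin r → Bool, (starRingEnd ℂ) (β z) * (‖condVec ψ z‖ : ℂ) = 0)
    (φ : EuclideanSpace ℂ ((Fin r → Bool) × (Fin m → Bool)))
    (hφ : ∀ z y, φ (z, y) = β z * ψ (z, y) / (‖condVec ψ z‖ : ℂ)) :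
    ‖φ‖ = 1 ∧ (inner ℂ ψ φ : ℂ) = 0 ∧
    ∑ z ∈ Finset.univ.filter (fun z => condVec φ z ≠ 0),
      ‖condVec φ z‖ ^ 2 *
        ‖(inner ℂ ((‖condVec ψ z‖⁻¹ : ℝ) • condVec ψ z)
          ((‖condVec φ z‖⁻¹ : ℝ) • condVec φ z) : ℂ)‖ ^ 2 = 1 :=
  stmt14_general ψ hnz β hβ hβα φ hφ
end
end
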